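/- (Lemma 2 of the paper.) Let X be a measurable space, μ a probability measure on X, and P, Q : X → ℝ measurable with P(x) > 0, Q(x) > 0 and max{|log P(x)|, |log Q(x)|} ≤ c for all x ∈ X, where c > 0. Let x₁, …, xₙ be i.i.d. random variables with law μ, let α* be a maximizer of the population log-likelihood L over [0,1], and let α̂ be a maximizer of the empirical log-likelihood L̂ₙ over [0,1]. Then for every ε ∈ (0,1), with probability at least 1−ε, |L(α*) − L(α̂)| ≤ 2·√(2c²·log(2/ε)/n). -/

import Mathlib

open MeasureTheory ProbabilityTheory Real

/-!
For each sample point, `β ↦ log ((1 - β) * P y + β * Q y)` is concave and bounded by `c`, so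
the population and the empirical log-likelihoods are concave in `β`. If `L α̂ < L α* - δ` with,
say, `α* ≤ α̂`, then by continuity and concavity of `L` there is a *deterministic* `β` with
`L β = L α* - δ` lying between `α*` and every such `α̂`; concavity of `L̂ₙ` then forces
`L̂ₙ β ≥ L̂ₙ α*`. This is a deviation event for a sum of `n` i.i.d. variables with values in
`[-2c, 2c]` and mean `-δ`, which Hoeffding's inequality bounds by `exp (-n δ² / (8 c²))`.
A union bound over the two sides of `α*`, with `δ = 2√(2c² log (2/ε)/n)`, gives `ε`.
-/

theorem one_sub_mul_add_mul_mem_segment {p q β : ℝ} (hβ : β ∈ Set.Icc (0 : ℝ) 1) :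
    (1 - β) * p + β * q ∈ segment ℝ p q :=
  ⟨1 - β, β, by linarith [hβ.2], hβ.1, by ring, rfl⟩

theorem abs_log_le_of_mem_segment {p q z : ℝ} (hp : 0 < p) (hq : 0 < q)
    (hz : z ∈ segment ℝ p q) : |log z| ≤ max |log p| |log q| := by
  rw [segment_eq_uIcc] at hz
  have hz0 : 0 < z := lt_of_lt_of_le (lt_min hp hq) hz.1
  rcases le_total p q with hpq | hqp
  · rw [Set.uIcc_of_le hpq] at hz
    exact abs_le_max_abs_abs (log_le_log hp hz.1) (log_le_log hz0 hz.2)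
  · rw [Set.uIcc_of_ge hqp] at hz
    exact max_comm |log p| _ ▸ abs_le_max_abs_abs (log_le_log hq hz.1) (log_le_log hz0 hz.2)

theorem concaveOn_log_one_sub_mul_add_mul {p q : ℝ} (hp : 0 < p) (hq : 0 < q) :
    ConcaveOn ℝ (Set.Icc 0 1) fun β => log ((1 - β) * p + β * q) := by
  have hpos : Set.Icc (0 : ℝ) 1 ⊆ AffineMap.lineMap p q ⁻¹' Set.Ioi 0 := fun β hβ => by
    simpa [AffineMap.lineMap_apply_module] using
      (convex_Ioi 0).segment_subset hp hq (one_sub_mul_add_mul_mem_segment (p := p) (q := q) hβ)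
  have hcomp : (fun β => log ((1 - β) * p + β * q)) = log ∘ AffineMap.lineMap p q := by
    ext β
    simp [AffineMap.lineMap_apply_module]
  rw [hcomp]
  exact (strictConcaveOn_log_Ioi.concaveOn.comp_affineMap _).subset hpos (convex_Icc 0 1)

theorem continuousOn_log_one_sub_mul_add_mul {p q : ℝ} (hp : 0 < p) (hq : 0 < q) :
    ContinuousOn (fun β => log ((1 - β) * p + β * q)) (Set.Icc 0 1) :=
  ContinuousOn.log (by fun_prop) fun β hβ =>
    ((convex_Ioi 0).segment_subset hp hq (one_sub_mul_add_mul_mem_segment hβ)).ne'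

theorem concaveOn_finsetSum {𝕜 E β ι : Type*} [Semiring 𝕜] [PartialOrder 𝕜] [AddCommMonoid E]
    [SMul 𝕜 E] [AddCommMonoid β] [PartialOrder β] [IsOrderedAddMonoid β] [Module 𝕜 β]
    {s : Set E} (hs : Convex 𝕜 s) (t : Finset ι) {f : ι → E → β}
    (hf : ∀ i ∈ t, ConcaveOn 𝕜 s (f i)) : ConcaveOn 𝕜 s fun z => ∑ i ∈ t, f i z := by
  classical
  induction t using Finset.induction_on with
  | empty => simpa using concaveOn_const 0 hs
  | insert i t hi ih =>
    simp_rw [Finset.sum_insert hi]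
    exact (hf i (t.mem_insert_self i)).add (ih fun j hj => hf j (Finset.mem_insert_of_mem hj))

theorem concaveOn_integral {E X : Type*} [AddCommGroup E] [Module ℝ E] [MeasurableSpace X]
    {μ : Measure X} {s : Set E} (hs : Convex ℝ s) {f : E → X → ℝ}
    (hf : ∀ y, ConcaveOn ℝ s (f · y)) (hint : ∀ z ∈ s, Integrable (f z) μ) :
    ConcaveOn ℝ s fun z => ∫ y, f z y ∂μ := by
  refine ⟨hs, fun u hu v hv a b ha hb hab => ?_⟩
  simp only [smul_eq_mul]
  rw [← integral_const_mul, ← integral_const_mul,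
    ← integral_add ((hint u hu).const_mul a) ((hint v hv).const_mul b)]
  exact integral_mono (((hint u hu).const_mul a).add ((hint v hv).const_mul b))
    (hint _ (hs hu hv ha hb hab)) fun y => (hf y).2 hu hv ha hb hab

theorem Real.mem_segment_or_mem_segment {α β γ e : ℝ} (hβ : β ∈ segment ℝ α e)
    (hγ : γ ∈ segment ℝ α e) : γ ∈ segment ℝ α β ∨ β ∈ segment ℝ α γ := by
  simp only [segment_eq_uIcc, Set.mem_uIcc] at *
  grind

theorem ConcaveOn.exists_eq_forall_lt_mem_segment {L : ℝ → ℝ} {s : Set ℝ} (hL : ConcaveOn ℝ s L)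
    (hLc : ContinuousOn L s) {α e γ₀ v : ℝ} (hα : α ∈ s) (he : e ∈ s) (hv : v ≤ L α)
    (hγ₀ : γ₀ ∈ segment ℝ α e) (hγ₀v : L γ₀ < v) :
    ∃ β ∈ segment ℝ α e, L β = v ∧ ∀ γ ∈ segment ℝ α e, L γ < v → β ∈ segment ℝ α γ := by
  have hsub : segment ℝ α e ⊆ s := hL.1.segment_subset hα he
  have hsub₀ : segment ℝ α γ₀ ⊆ segment ℝ α e :=
    (convex_segment α e).segment_subset (left_mem_segment ℝ α e) hγ₀
  obtain ⟨β, hβ, hβv⟩ : v ∈ L '' segment ℝ α γ₀ := by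
    rw [segment_eq_uIcc]
    refine intermediate_value_uIcc ?_ (Set.mem_uIcc_of_ge hγ₀v.le hv)
    exact hLc.mono (segment_eq_uIcc α γ₀ ▸ hsub₀.trans hsub)
  refine ⟨β, hsub₀ hβ, hβv, fun γ hγ hγv => ?_⟩
  refine (Real.mem_segment_or_mem_segment (hsub₀ hβ) hγ).resolve_left fun hγβ => ?_
  have := hL.ge_on_segment hα (hsub (hsub₀ hβ)) hγβ
  rw [hβv, min_eq_right hv] at this
  linarith

theorem measureReal_le_sum_sub_integral_le {X Ω ι : Type*} [MeasurableSpace X]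
    [MeasurableSpace Ω] [Fintype ι] {μ : Measure X} {ν : Measure Ω} [IsProbabilityMeasure ν]
    {x : ι → Ω → X} (hxm : ∀ i, Measurable (x i)) (hindep : iIndepFun x ν)
    (hlaw : ∀ i, ν.map (x i) = μ) {g : X → ℝ} (hg : Measurable g) {a b : ℝ}
    (hgab : ∀ y, g y ∈ Set.Icc a b) {r : ℝ} (hr : 0 ≤ r) :
    ν.real {ω | r ≤ ∑ i, (g (x i ω) - ∫ y, g y ∂μ)} ≤
      exp (-r ^ 2 / (2 * Fintype.card ι * ((b - a) / 2) ^ 2)) := by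
  have hmean : ∀ i, ν[fun ω => g (x i ω)] = ∫ y, g y ∂μ := fun i => by
    rw [← hlaw i, integral_map (hxm i).aemeasurable hg.aestronglyMeasurable]
  have hsubG : ∀ i ∈ Finset.univ,
      HasSubgaussianMGF (fun ω => g (x i ω) - ∫ y, g y ∂μ) ((‖b - a‖₊ / 2) ^ 2) ν :=
    fun i _ => hmean i ▸ hasSubgaussianMGF_of_mem_Icc (hg.comp (hxm i)).aemeasurable
      (ae_of_all _ fun ω => hgab (x i ω))
  have hindep' : iIndepFun (fun i ω => g (x i ω) - ∫ y, g y ∂μ) ν :=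
    hindep.comp (fun _ y => g y - ∫ y, g y ∂μ) fun _ => hg.sub_const _
  refine (HasSubgaussianMGF.measure_sum_ge_le_of_iIndepFun hindep' hsubG hr).trans_eq ?_
  simp [Finset.sum_const, div_pow, mul_assoc]

section ConcaveFamily

variable {X Ω ι : Type*} [MeasurableSpace X] [MeasurableSpace Ω] [Fintype ι]
  {μ : Measure X} [IsFiniteMeasure μ] {ν : Measure Ω} [IsProbabilityMeasure ν]
  {x : ι → Ω → X} {f : ℝ → X → ℝ} {a b c : ℝ}

theorem measureReal_mem_segment_integral_lt_sub_le (hxm : ∀ i, Measurable (x i))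
    (hindep : iIndepFun x ν) (hlaw : ∀ i, ν.map (x i) = μ)
    (hfm : ∀ β ∈ Set.Icc a b, Measurable (f β)) (hfc : ∀ β ∈ Set.Icc a b, ∀ y, |f β y| ≤ c)
    (hconc : ∀ y, ConcaveOn ℝ (Set.Icc a b) (f · y))
    (hcont : ∀ y, ContinuousOn (f · y) (Set.Icc a b))
    {α e : ℝ} (hα : α ∈ Set.Icc a b) (he : e ∈ Set.Icc a b) {αhat : Ω → ℝ}
    (hαhat : ∀ ω, αhat ω ∈ Set.Icc a b)
    (hαhatmax : ∀ ω, ∑ i, f α (x i ω) ≤ ∑ i, f (αhat ω) (x i ω)) {δ : ℝ} (hδ : 0 ≤ δ) :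
    ν.real {ω | αhat ω ∈ segment ℝ α e ∧ ∫ y, f (αhat ω) y ∂μ < ∫ y, f α y ∂μ - δ} ≤
      exp (-(Fintype.card ι * δ ^ 2 / (8 * c ^ 2))) := by
  set L := fun β => ∫ y, f β y ∂μ
  have hint : ∀ β ∈ Set.Icc a b, Integrable (f β) μ := fun β hβ =>
    .of_bound (hfm β hβ).aestronglyMeasurable c (ae_of_all _ (hfc β hβ))
  have hLconc : ConcaveOn ℝ (Set.Icc a b) L := concaveOn_integral (convex_Icc a b) hconc hint
  have hLcont : ContinuousOn L (Set.Icc a b) :=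
    continuousOn_of_dominated (fun β hβ => (hfm β hβ).aestronglyMeasurable)
      (fun β hβ => ae_of_all _ (hfc β hβ)) (integrable_const c) (ae_of_all _ hcont)
  by_cases hbad : ∃ γ ∈ segment ℝ α e, L γ < L α - δ
  swap
  · have hempty : {ω | αhat ω ∈ segment ℝ α e ∧ L (αhat ω) < L α - δ} = ∅ :=
      Set.eq_empty_of_forall_notMem fun ω hω => hbad ⟨_, hω⟩
    rw [hempty, measureReal_empty]
    positivity
  obtain ⟨γ₀, hγ₀, hγ₀δ⟩ := hbad
  obtain ⟨β, hβ, hβδ, hβmem⟩ :=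
    hLconc.exists_eq_forall_lt_mem_segment hLcont hα he (by linarith) hγ₀ hγ₀δ
  have hβI : β ∈ Set.Icc a b := (convex_Icc a b).segment_subset hα he hβ
  set g := fun y => f β y - f α y
  have hgab : ∀ y, g y ∈ Set.Icc (-(2 * c)) (2 * c) := fun y => by
    have := abs_le.1 (hfc β hβI y)
    have := abs_le.1 (hfc α hα y)
    constructor <;> simp only [g] <;> linarith
  have hgmean : ∫ y, g y ∂μ = -δ := by
    simp only [g]
    rw [integral_sub (hint β hβI) (hint α hα)]
    change L β - L α = -δ
    linarith
  calc ν.real {ω | αhat ω ∈ segment ℝ α e ∧ L (αhat ω) < L α - δ}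
      ≤ ν.real {ω | Fintype.card ι * δ ≤ ∑ i, (g (x i ω) - ∫ y, g y ∂μ)} := by
        refine measureReal_mono fun ω ⟨hseg, hlt⟩ => ?_
        have hSconc : ConcaveOn ℝ (Set.Icc a b) fun γ => ∑ i, f γ (x i ω) :=
          concaveOn_finsetSum (convex_Icc a b) _ fun i _ => hconc (x i ω)
        have hS := hSconc.ge_on_segment hα (hαhat ω) (hβmem _ hseg hlt)
        rw [min_eq_left (hαhatmax ω)] at hS
        simp only [Set.mem_ofPred_eq, hgmean, g, sub_neg_eq_add, Finset.sum_add_distrib,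
          Finset.sum_sub_distrib, Finset.sum_const, Finset.card_univ, nsmul_eq_mul]
        linarith
    _ ≤ exp (-(Fintype.card ι * δ) ^ 2 / (2 * Fintype.card ι * ((2 * c - -(2 * c)) / 2) ^ 2)) :=
        measureReal_le_sum_sub_integral_le hxm hindep hlaw ((hfm β hβI).sub (hfm α hα)) hgab
          (by positivity)
    _ = exp (-(Fintype.card ι * δ ^ 2 / (8 * c ^ 2))) := by
        congr 1
        rcases eq_or_ne (Fintype.card ι : ℝ) 0 with hn | hn
        · simp [hn]
        · field_simp
          ring

theorem le_measureReal_abs_integral_sub_le (hxm : ∀ i, Measurable (x i))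
    (hindep : iIndepFun x ν) (hlaw : ∀ i, ν.map (x i) = μ)
    (hfm : ∀ β ∈ Set.Icc a b, Measurable (f β)) (hfc : ∀ β ∈ Set.Icc a b, ∀ y, |f β y| ≤ c)
    (hconc : ∀ y, ConcaveOn ℝ (Set.Icc a b) (f · y))
    (hcont : ∀ y, ContinuousOn (f · y) (Set.Icc a b))
    {α : ℝ} (hα : α ∈ Set.Icc a b) (hαmax : ∀ β ∈ Set.Icc a b, ∫ y, f β y ∂μ ≤ ∫ y, f α y ∂μ)
    {αhat : Ω → ℝ} (hαhat : ∀ ω, αhat ω ∈ Set.Icc a b)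
    (hαhatmax : ∀ ω, ∑ i, f α (x i ω) ≤ ∑ i, f (αhat ω) (x i ω)) {δ : ℝ} (hδ : 0 ≤ δ) :
    1 - 2 * exp (-(Fintype.card ι * δ ^ 2 / (8 * c ^ 2))) ≤
      ν.real {ω | |∫ y, f α y ∂μ - ∫ y, f (αhat ω) y ∂μ| ≤ δ} := by
  set E := {ω | |∫ y, f α y ∂μ - ∫ y, f (αhat ω) y ∂μ| ≤ δ}
  set bad := fun e => {ω | αhat ω ∈ segment ℝ α e ∧ ∫ y, f (αhat ω) y ∂μ < ∫ y, f α y ∂μ - δ}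
  have hbad : ∀ e ∈ Set.Icc a b, ν.real (bad e) ≤ exp (-(Fintype.card ι * δ ^ 2 / (8 * c ^ 2))) :=
    fun e he => measureReal_mem_segment_integral_lt_sub_le hxm hindep hlaw hfm hfc hconc hcont
      hα he hαhat hαhatmax hδ
  have hcompl : Eᶜ ⊆ bad a ∪ bad b := by
    intro ω hω
    have hgap : ∫ y, f (αhat ω) y ∂μ < ∫ y, f α y ∂μ - δ := by
      have hlt : δ < |∫ y, f α y ∂μ - ∫ y, f (αhat ω) y ∂μ| := not_le.1 hω
      rw [abs_of_nonneg (sub_nonneg.2 (hαmax _ (hαhat ω)))] at hlt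
      linarith
    rcases le_total (αhat ω) α with hle | hge
    · exact .inl ⟨by simpa [segment_eq_uIcc, Set.mem_uIcc] using .inr ⟨(hαhat ω).1, hle⟩, hgap⟩
    · exact .inr ⟨by simpa [segment_eq_uIcc, Set.mem_uIcc] using .inl ⟨hge, (hαhat ω).2⟩, hgap⟩
  have hE := measureReal_union_le (μ := ν) E Eᶜ
  rw [Set.union_compl_self, probReal_univ] at hE
  have := (measureReal_mono (μ := ν) hcompl).trans (measureReal_union_le (bad a) (bad b))
  linarith [hbad a ⟨le_rfl, hα.1.trans hα.2⟩, hbad b ⟨hα.1.trans hα.2, le_rfl⟩]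

end ConcaveFamily

/-- Lemma 2 of the paper: with probability at least `1 - ε`, the population
log-likelihood at the empirical maximizer `α̂` is within `2√(2c² log(2/ε)/n)` of its
maximum value at the population maximizer `α*`. -/
theorem population_logLikelihood_gap
    {X : Type*} [MeasurableSpace X] (μ : Measure X) [IsProbabilityMeasure μ]
    (P Q : X → ℝ) (hPm : Measurable P) (hQm : Measurable Q)
    (hP : ∀ x, 0 < P x) (hQ : ∀ x, 0 < Q x)
    (c : ℝ) (hc : 0 < c)
    (hbound : ∀ x, max |Real.log (P x)| |Real.log (Q x)| ≤ c)
    {Ω : Type*} [MeasureSpace Ω] [IsProbabilityMeasure (ℙ : Measure Ω)]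
    (n : ℕ) (hn : 0 < n) (x : Fin n → Ω → X)
    (hxm : ∀ i, Measurable (x i))
    (hindep : iIndepFun x ℙ)
    (hlaw : ∀ i, Measure.map (x i) ℙ = μ)
    (αstar : ℝ) (hαstar : αstar ∈ Set.Icc (0 : ℝ) 1)
    (hαstarMax : ∀ β ∈ Set.Icc (0 : ℝ) 1,
      (∫ y, Real.log ((1 - β) * P y + β * Q y) ∂μ) ≤
        ∫ y, Real.log ((1 - αstar) * P y + αstar * Q y) ∂μ)
    (αhat : Ω → ℝ) (hαhat : ∀ ω, αhat ω ∈ Set.Icc (0 : ℝ) 1)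
    (hαhatMax : ∀ ω, ∀ β ∈ Set.Icc (0 : ℝ) 1,
      (1 / (n : ℝ)) * ∑ i, Real.log ((1 - β) * P (x i ω) + β * Q (x i ω)) ≤
        (1 / (n : ℝ)) *
          ∑ i, Real.log ((1 - αhat ω) * P (x i ω) + αhat ω * Q (x i ω)))
    (ε : ℝ) (hε : ε ∈ Set.Ioo (0 : ℝ) 1) :
    (ℙ {ω : Ω |
        |(∫ y, Real.log ((1 - αstar) * P y + αstar * Q y) ∂μ) -
          ∫ y, Real.log ((1 - αhat ω) * P y + αhat ω * Q y) ∂μ| ≤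
          2 * Real.sqrt (2 * c ^ 2 * Real.log (2 / ε) / (n : ℝ))}).toReal ≥ 1 - ε := by
  obtain ⟨hε0, hε1⟩ := hε
  set δ := 2 * Real.sqrt (2 * c ^ 2 * Real.log (2 / ε) / (n : ℝ))
  have hlog : 0 < log (2 / ε) := log_pos (by rw [lt_div_iff₀ hε0]; linarith)
  have hexponent : Fintype.card (Fin n) * δ ^ 2 / (8 * c ^ 2) = log (2 / ε) := by
    have hn' : (n : ℝ) ≠ 0 := by positivity
    have hsq : 0 ≤ 2 * c ^ 2 * log (2 / ε) / n := by positivity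
    simp only [δ, Fintype.card_fin, mul_pow, sq_sqrt hsq]
    field_simp
    ring
  have hmix : ∀ β ∈ Set.Icc (0 : ℝ) 1, ∀ y, |log ((1 - β) * P y + β * Q y)| ≤ c :=
    fun β hβ y => (abs_log_le_of_mem_segment (hP y) (hQ y)
      (one_sub_mul_add_mul_mem_segment hβ)).trans (hbound y)
  have key := le_measureReal_abs_integral_sub_le (ν := ℙ)
    (f := fun β y => log ((1 - β) * P y + β * Q y)) hxm hindep hlaw
    (fun β _ => ((hPm.const_mul _).add (hQm.const_mul _)).log) hmix
    (fun y => concaveOn_log_one_sub_mul_add_mul (hP y) (hQ y))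
    (fun y => continuousOn_log_one_sub_mul_add_mul (hP y) (hQ y)) hαstar hαstarMax hαhat
    (fun ω => le_of_mul_le_mul_left (hαhatMax ω αstar hαstar) (by positivity))
    (by positivity : 0 ≤ δ)
  rw [hexponent, exp_neg, exp_log (by positivity), inv_div] at key
  exact (by ring : 1 - ε = 1 - 2 * (ε / 2)) ▸ key
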